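/- arXiv:1310.4046 — 4 statements merged into one kernel-verified Lean document; each statement's English description precedes it below -/
import Mathlib

section
/- Let A be self-adjoint positive definite on a finite-dimensional real inner product space, τ > 0 with τ‖A‖ ≤ 2(1−ε) for some 0 < ε < 1. If a sequence (yⁿ) satisfies (yⁿ⁺¹ − yⁿ)/τ + A yⁿ = φⁿ for n = 0,…,N−1 with y⁰ = u⁰, then for every n ≤ N−1: ⟨A yⁿ⁺¹, yⁿ⁺¹⟩ ≤ ⟨A u⁰, u⁰⟩ + (τ/(2ε)) Σ_{k=0}^{n} ‖φᵏ‖². -/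
/-!
Energy method. Writing `w = yⁿ⁺¹ - yⁿ`, the scheme gives `A yⁿ = φⁿ - w / τ`, so by symmetry of `A`
`⟪A yⁿ⁺¹, yⁿ⁺¹⟫ = ⟪A yⁿ, yⁿ⟫ + 2⟪φⁿ, w⟫ - (2/τ)‖w‖² + ⟪A w, w⟫`.
Young's inequality bounds `2⟪φⁿ, w⟫` by `(τ/(2ε))‖φⁿ‖² + (2ε/τ)‖w‖²`, and the step restriction
`τ‖A‖ ≤ 2(1 - ε)` makes the remaining `‖w‖²` terms nonpositive. Summing the one-step bound gives the
estimate.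
-/

open RealInnerProductSpace

section InnerProductSpace

variable {E : Type*} [NormedAddCommGroup E] [InnerProductSpace ℝ E]

theorem two_mul_inner_le_mul_add_div (u w : E) {c : ℝ} (hc : 0 < c) :
    2 * ⟪u, w⟫ ≤ c * ‖u‖ ^ 2 + ‖w‖ ^ 2 / c := by
  have hsq : c * ‖u‖ ^ 2 + ‖w‖ ^ 2 / c - 2 * (‖u‖ * ‖w‖) = (c * ‖u‖ - ‖w‖) ^ 2 / c := by
    field_simp
    ring
  have : 0 ≤ (c * ‖u‖ - ‖w‖) ^ 2 / c := by positivity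
  linarith [real_inner_le_norm u w]

theorem ContinuousLinearMap.inner_apply_self_le (T : E →L[ℝ] E) (x : E) :
    ⟪T x, x⟫ ≤ ‖T‖ * ‖x‖ ^ 2 :=
  calc ⟪T x, x⟫ ≤ ‖T x‖ * ‖x‖ := real_inner_le_norm _ _
    _ ≤ ‖T‖ * ‖x‖ * ‖x‖ := by gcongr; exact T.le_opNorm x
    _ = ‖T‖ * ‖x‖ ^ 2 := by ring

theorem LinearMap.IsSymmetric.inner_map_add_add {T : E →ₗ[ℝ] E} (hT : T.IsSymmetric) (x w : E) :
    ⟪T (x + w), x + w⟫ = ⟪T x, x⟫ + 2 * ⟪T x, w⟫ + ⟪T w, w⟫ := by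
  have hswap : ⟪T w, x⟫ = ⟪T x, w⟫ := by rw [hT w x, real_inner_comm]
  rw [map_add, inner_add_left, inner_add_right, inner_add_right, hswap]
  ring

theorem explicit_scheme_energy_step [CompleteSpace E] {A : E →L[ℝ] E} (hA : IsSelfAdjoint A)
    {τ ε : ℝ} (hτ : 0 < τ) (hε : 0 < ε) (hstep : τ * ‖A‖ ≤ 2 * (1 - ε)) {y y' f : E}
    (hscheme : (1 / τ) • (y' - y) + A y = f) :
    ⟪A y', y'⟫ ≤ ⟪A y, y⟫ + τ / (2 * ε) * ‖f‖ ^ 2 := by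
  set w := y' - y
  have hy' : y' = y + w := by simp [w]
  have hAy : A y = f - (1 / τ) • w := by rw [← hscheme]; abel
  have hexpand : ⟪A (y + w), y + w⟫ = ⟪A y, y⟫ + 2 * ⟪A y, w⟫ + ⟪A w, w⟫ :=
    hA.isSymmetric.inner_map_add_add y w
  have hcross : ⟪A y, w⟫ = ⟪f, w⟫ - 1 / τ * ‖w‖ ^ 2 := by
    rw [hAy, inner_sub_left, real_inner_smul_left, real_inner_self_eq_norm_sq]
  have hyoung : 2 * ⟪f, w⟫ ≤ τ / (2 * ε) * ‖f‖ ^ 2 + 2 * ε / τ * ‖w‖ ^ 2 := by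
    convert two_mul_inner_le_mul_add_div f w (c := τ / (2 * ε)) (by positivity) using 2
    field_simp
  have hcoef : ‖A‖ - 2 / τ + 2 * ε / τ ≤ 0 := by
    have : τ * (‖A‖ - 2 / τ + 2 * ε / τ) ≤ 0 := by
      field_simp
      linarith
    exact nonpos_of_mul_nonpos_right this hτ
  rw [hy', hexpand, hcross]
  linear_combination hyoung + A.inner_apply_self_le w +
    mul_nonpos_of_nonpos_of_nonneg hcoef (sq_nonneg ‖w‖)

end InnerProductSpace

theorem le_add_sum_range_of_le_add {a b : ℕ → ℝ} {N : ℕ} (h : ∀ n < N, a (n + 1) ≤ a n + b n) :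
    ∀ n < N, a (n + 1) ≤ a 0 + ∑ k ∈ Finset.range (n + 1), b k := by
  intro n hn
  induction n with
  | zero => simpa using h 0 hn
  | succ m ih =>
    rw [Finset.sum_range_succ]
    linarith [ih (by omega), h (m + 1) hn]

theorem stmt_1_general {H : Type*} [NormedAddCommGroup H] [InnerProductSpace ℝ H]
    [FiniteDimensional ℝ H] (A : H →L[ℝ] H) (hA : IsSelfAdjoint A)
    (τ ε : ℝ) (hτ : 0 < τ)
    (hε0 : 0 < ε) (hstep : τ * ‖A‖ ≤ 2 * (1 - ε))
    (N : ℕ) (y φ : ℕ → H) (u0 : H)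
    (hscheme : ∀ n < N, (1 / τ) • (y (n + 1) - y n) + A (y n) = φ n)
    (hinit : y 0 = u0) :
    ∀ n < N, ⟪A (y (n + 1)), y (n + 1)⟫ ≤
      ⟪A u0, u0⟫ + (τ / (2 * ε)) * ∑ k ∈ Finset.range (n + 1), ‖φ k‖ ^ 2 := by
  have hstep_energy : ∀ n < N, ⟪A (y (n + 1)), y (n + 1)⟫ ≤
      ⟪A (y n), y n⟫ + τ / (2 * ε) * ‖φ n‖ ^ 2 := fun n hn =>
    explicit_scheme_energy_step hA hτ hε0 hstep (hscheme n hn)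
  simpa only [hinit, Finset.mul_sum] using
    le_add_sum_range_of_le_add (a := fun n => ⟪A (y n), y n⟫) hstep_energy

theorem stmt_1 {H : Type*} [NormedAddCommGroup H] [InnerProductSpace ℝ H]
    [FiniteDimensional ℝ H] (A : H →L[ℝ] H) (hA : IsSelfAdjoint A)
    (hApos : ∀ y : H, y ≠ 0 → 0 < ⟪A y, y⟫) (τ ε : ℝ) (hτ : 0 < τ)
    (hε0 : 0 < ε) (hε1 : ε < 1) (hstep : τ * ‖A‖ ≤ 2 * (1 - ε))
    (N : ℕ) (y φ : ℕ → H) (u0 : H)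
    (hscheme : ∀ n < N, (1 / τ) • (y (n + 1) - y n) + A (y n) = φ n)
    (hinit : y 0 = u0) :
    ∀ n < N, ⟪A (y (n + 1)), y (n + 1)⟫ ≤
      ⟪A u0, u0⟫ + (τ / (2 * ε)) * ∑ k ∈ Finset.range (n + 1), ‖φ k‖ ^ 2 :=
  stmt_1_general A hA τ ε hτ hε0 hstep N y φ u0 hscheme hinit
end

section
/- With A = A₁ + A₂, A₂ = A₁*, A positive definite, σ ≥ 1/2, τ > 0, and B = (E + στA₁)(E + στA₂), one has B − (τ/2)A ≥ E. -/
/-! Expanding the product gives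
`B - (τ/2) A - E = (σ - 1/2) τ A + (στ)² A₁ A₁*`, a nonnegative combination of positive operators. -/

open RealInnerProductSpace

theorem one_add_smul_mul_one_add_smul {R A : Type*} [CommSemiring R] [Semiring A] [Algebra R A]
    (c : R) (a b : A) :
    (1 + c • a) * (1 + c • b) = 1 + c • (a + b) + c ^ 2 • (a * b) := by
  simp only [add_mul, mul_add, one_mul, mul_one, smul_mul_smul_comm, smul_add, sq]
  abel

namespace ContinuousLinearMap

variable {H : Type*} [NormedAddCommGroup H] [InnerProductSpace ℝ H] [CompleteSpace H]

theorem isPositive_add_adjoint {T : H →L[ℝ] H} (hT : ∀ y, 0 ≤ ⟪(T + adjoint T) y, y⟫) :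
    (T + adjoint T).IsPositive := by
  rw [isPositive_iff', ← star_eq_adjoint]
  exact ⟨IsSelfAdjoint.add_star_self T, hT⟩

theorem one_le_one_add_smul_comp_one_add_smul_adjoint_sub {T : H →L[ℝ] H}
    (hT : (T + adjoint T).IsPositive) {σ τ : ℝ} (hσ : 1 / 2 ≤ σ) (hτ : 0 ≤ τ) :
    1 ≤ (1 + (σ * τ) • T) ∘L (1 + (σ * τ) • adjoint T) - (τ / 2) • (T + adjoint T) := by
  have hB : (1 + (σ * τ) • T) ∘L (1 + (σ * τ) • adjoint T) - (τ / 2) • (T + adjoint T) - 1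
      = ((σ - 1 / 2) * τ) • (T + adjoint T) + (σ * τ) ^ 2 • (T ∘L adjoint T) := by
    rw [← mul_def, one_add_smul_mul_one_add_smul, mul_def]
    module
  rw [le_def, hB]
  exact (hT.smul_of_nonneg (by nlinarith)).add
    ((isPositive_self_comp_adjoint T).smul_of_nonneg (sq_nonneg _))

end ContinuousLinearMap

theorem stmt_4 {H : Type*} [NormedAddCommGroup H] [InnerProductSpace ℝ H]
    [FiniteDimensional ℝ H] (A₁ : H →L[ℝ] H) (σ τ : ℝ) (hσ : 1 / 2 ≤ σ) (hτ : 0 < τ)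
    (hApos : ∀ y : H, y ≠ 0 → 0 < ⟪(A₁ + ContinuousLinearMap.adjoint A₁) y, y⟫) :
    let A₂ := ContinuousLinearMap.adjoint A₁
    let A := A₁ + A₂
    let B := (1 + (σ * τ) • A₁) ∘L (1 + (σ * τ) • A₂)
    ∀ y : H, ⟪y, y⟫ ≤ ⟪B y - (τ / 2) • A y, y⟫ := by
  intro A₂ A B y
  have hA : A.IsPositive := ContinuousLinearMap.isPositive_add_adjoint fun y ↦ by
    rcases eq_or_ne y 0 with rfl | hy
    · simp
    · exact (hApos y hy).le
  have hBA := (ContinuousLinearMap.le_def _ _).mp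
    (ContinuousLinearMap.one_le_one_add_smul_comp_one_add_smul_adjoint_sub hA hσ hτ.le)
  have hy := hBA.inner_nonneg_left y
  rw [sub_apply, one_apply_eq_self, inner_sub_left, sub_nonneg] at hy
  exact hy
end

section
/- Let A₁ be a linear operator on a finite-dimensional real inner product space with A₂ = A₁*, A = A₁ + A₂ self-adjoint positive definite, σ ≥ 1/2, τ > 0, B = (E + στA₁)(E + στA₂). If (yⁿ) satisfies B(yⁿ⁺¹ − yⁿ)/τ + Ayⁿ = φⁿ for n = 0,…,N−1 with y⁰ = u⁰, then ⟨Ayⁿ⁺¹, yⁿ⁺¹⟩ ≤ ⟨Au⁰, u⁰⟩ + (τ/2)Σ_{k=0}^n ‖φᵏ‖² for all n ≤ N−1. -/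
/-!
Writing `w = (yⁿ⁺¹ - yⁿ)/τ`, the factorized operator satisfies
`⟪B w, w⟫ = ‖w‖² + στ⟪A w, w⟫ + σ²τ²‖A₂ w‖²`, and testing the scheme against `2τ w` gives
`⟪A yⁿ⁺¹, yⁿ⁺¹⟫ = ⟪A yⁿ, yⁿ⟫ + 2τ⟪φⁿ, w⟫ - 2τ‖w‖² - (2σ - 1)τ²⟪A w, w⟫ - 2σ²τ³‖A₂ w‖²`.
For `σ ≥ 1/2` the last two terms are nonpositive, and `2⟪φ, w⟫ - 2‖w‖² ≤ ‖φ‖²/2`, so each step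
raises the energy by at most `(τ/2)‖φⁿ‖²`; summing the steps gives the bound.
-/

open RealInnerProductSpace ContinuousLinearMap Finset

lemma le_add_sum_range_of_succ_le {E a : ℕ → ℝ} {N : ℕ}
    (h : ∀ n < N, E (n + 1) ≤ E n + a n) : ∀ n ≤ N, E n ≤ E 0 + ∑ k ∈ range n, a k := by
  intro n hn
  induction n with
  | zero => simp
  | succ n ih =>
    rw [sum_range_succ]
    linarith [h n hn, ih (Nat.le_of_succ_le hn)]

section

variable {H : Type*} [NormedAddCommGroup H] [InnerProductSpace ℝ H] [CompleteSpace H]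

lemma IsSelfAdjoint.inner_apply_add_smul {A : H →L[ℝ] H} (hA : IsSelfAdjoint A)
    (x w : H) (t : ℝ) :
    ⟪A (x + t • w), x + t • w⟫ = ⟪A x, x⟫ + 2 * t * ⟪A x, w⟫ + t ^ 2 * ⟪A w, w⟫ := by
  have hsymm : ⟪A w, x⟫ = ⟪A x, w⟫ := by
    rw [← coe_coe, hA.isSymmetric w x, coe_coe, real_inner_comm]
  simp only [map_add, map_smul, inner_add_left, inner_add_right, real_inner_smul_left,
    real_inner_smul_right, hsymm]
  ring

lemma isSelfAdjoint_add_adjoint (T : H →L[ℝ] H) : IsSelfAdjoint (T + adjoint T) :=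
  IsSelfAdjoint.add_star_self T

lemma inner_one_add_smul_comp_one_add_smul_adjoint_apply_self (T : H →L[ℝ] H) (c : ℝ) (w : H) :
    ⟪((1 + c • T) ∘L (1 + c • adjoint T)) w, w⟫ =
      ‖w‖ ^ 2 + c * ⟪(T + adjoint T) w, w⟫ + c ^ 2 * ‖adjoint T w‖ ^ 2 := by
  have hTT : ⟪T (adjoint T w), w⟫ = ‖adjoint T w‖ ^ 2 := by
    rw [← adjoint_inner_right, real_inner_self_eq_norm_sq]
  simp only [comp_apply, add_apply, smul_apply, one_apply_eq_self, map_add, map_smul,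
    inner_add_left, real_inner_smul_left, hTT, real_inner_self_eq_norm_sq]
  ring

lemma inner_add_adjoint_le_of_factorized_step (T : H →L[ℝ] H) {σ τ : ℝ} (hσ : 1 / 2 ≤ σ)
    (hτ : 0 < τ) (hA : ∀ w : H, 0 ≤ ⟪(T + adjoint T) w, w⟫) {x x' f : H}
    (hstep : ((1 + (σ * τ) • T) ∘L (1 + (σ * τ) • adjoint T)) ((1 / τ) • (x' - x)) +
      (T + adjoint T) x = f) :
    ⟪(T + adjoint T) x', x'⟫ ≤ ⟪(T + adjoint T) x, x⟫ + (τ / 2) * ‖f‖ ^ 2 := by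
  set A := T + adjoint T
  set w := (1 / τ) • (x' - x)
  have hx' : x' = x + τ • w := by
    simp only [w, smul_smul, mul_one_div_cancel hτ.ne', one_smul, add_sub_cancel]
  have hAxw : ⟪A x, w⟫ =
      ⟪f, w⟫ - (‖w‖ ^ 2 + σ * τ * ⟪A w, w⟫ + (σ * τ) ^ 2 * ‖adjoint T w‖ ^ 2) := by
    rw [← inner_one_add_smul_comp_one_add_smul_adjoint_apply_self, ← hstep, inner_add_left]
    ring
  have hfw : ⟪f, w⟫ ≤ ‖f‖ * ‖w‖ := real_inner_le_norm f w
  rw [hx', (isSelfAdjoint_add_adjoint T).inner_apply_add_smul, hAxw]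
  nlinarith [mul_nonneg hτ.le (sq_nonneg (‖f‖ - 2 * ‖w‖)),
    mul_nonneg (mul_nonneg (sq_nonneg τ) (hA w)) (by linarith : (0 : ℝ) ≤ 2 * σ - 1),
    mul_nonneg hτ.le (sq_nonneg (σ * τ * ‖adjoint T w‖))]

end

theorem stmt_5 {H : Type*} [NormedAddCommGroup H] [InnerProductSpace ℝ H]
    [FiniteDimensional ℝ H] (A₁ : H →L[ℝ] H) (σ τ : ℝ) (hσ : 1 / 2 ≤ σ) (hτ : 0 < τ)
    (hApos : ∀ y : H, y ≠ 0 → 0 < ⟪(A₁ + ContinuousLinearMap.adjoint A₁) y, y⟫)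
    (N : ℕ) (y φ : ℕ → H) (u0 : H)
    (hscheme : ∀ n < N,
      ((1 + (σ * τ) • A₁) ∘L (1 + (σ * τ) • ContinuousLinearMap.adjoint A₁))
        ((1 / τ) • (y (n + 1) - y n)) +
        (A₁ + ContinuousLinearMap.adjoint A₁) (y n) = φ n)
    (hinit : y 0 = u0) :
    ∀ n < N,
      ⟪(A₁ + ContinuousLinearMap.adjoint A₁) (y (n + 1)), y (n + 1)⟫ ≤
        ⟪(A₁ + ContinuousLinearMap.adjoint A₁) u0, u0⟫ +
          (τ / 2) * ∑ k ∈ Finset.range (n + 1), ‖φ k‖ ^ 2 := by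
  have hAnonneg : ∀ w : H, 0 ≤ ⟪(A₁ + adjoint A₁) w, w⟫ := fun w => by
    rcases eq_or_ne w 0 with rfl | hw
    · simp
    · exact (hApos w hw).le
  have hstep (n : ℕ) (hn : n < N) := inner_add_adjoint_le_of_factorized_step A₁ hσ hτ hAnonneg
    (hscheme n hn)
  intro n hn
  simpa only [hinit, mul_sum] using
    le_add_sum_range_of_succ_le (E := fun n => ⟪(A₁ + adjoint A₁) (y n), y n⟫) hstep (n + 1) hn
end

section
/- The hyperbolic ATM scheme G(yⁿ⁺¹ − 2yⁿ + yⁿ⁻¹)/τ² + Ayⁿ = φⁿ with G = (E + στ²A₁)(E + στ²A₂) and A = A₁ + A₂ is algebraically equivalent to R(wⁿ⁺¹ − wⁿ)/τ + (1/2)A(vⁿ⁺¹ + vⁿ) = φⁿ, where vⁿ = (yⁿ + yⁿ⁻¹)/2, wⁿ = (yⁿ − yⁿ⁻¹)/τ, and R = E + (σ − 1/4)τ²A + σ²τ⁴A₁A₂. -/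
/-!
Expanding the factorised operator gives `G = R + (τ² / 4) A`. The second difference
`yⁿ⁺¹ - 2yⁿ + yⁿ⁻¹` equals `τ (wⁿ⁺¹ - wⁿ)`, and `(vⁿ⁺¹ + vⁿ) / 2` is `yⁿ` plus a quarter of that
second difference, so the extra `(τ² / 4) A` term in `G` is exactly what turns `A yⁿ` into the
averaged term `(1 / 2) A (vⁿ⁺¹ + vⁿ)`.
-/

namespace LinearMap

variable {R M : Type*} [CommRing R] [AddCommGroup M] [Module R M]

theorem id_add_smul_comp_id_add_smul (f g : M →ₗ[R] M) (c : R) :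
    (id + c • f) ∘ₗ (id + c • g) = id + c • (f + g) + c ^ 2 • (f ∘ₗ g) := by
  ext x
  simp only [comp_apply, add_apply, smul_apply, id_apply, map_add, map_smul]
  module

end LinearMap

section Differences

variable {K V : Type*} [Field K] [AddCommGroup V] [Module K V]

theorem smul_sub_smul_eq_sq_smul_second_difference (c : K) (ym y yp : V) :
    c • (c • (yp - y) - c • (y - ym)) = c ^ 2 • (yp - 2 • y + ym) := by
  module

theorem half_smul_add_averages [CharZero K] (ym y yp : V) :
    (1 / 2 : K) • ((1 / 2 : K) • (yp + y) + (1 / 2 : K) • (y + ym)) =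
      (1 / 4 : K) • (yp - 2 • y + ym) + y := by
  module

end Differences

theorem stmt_15 {H : Type*} [AddCommGroup H] [Module ℝ H]
    (A₁ A₂ : H →ₗ[ℝ] H) (σ τ : ℝ) (hτ : 0 < τ) (ym y yp φ : H) :
    let A := A₁ + A₂
    let G := (LinearMap.id + (σ * τ ^ 2) • A₁) ∘ₗ (LinearMap.id + (σ * τ ^ 2) • A₂)
    let R := LinearMap.id + ((σ - 1 / 4) * τ ^ 2) • A + (σ ^ 2 * τ ^ 4) • (A₁ ∘ₗ A₂)
    let vp := (1 / 2 : ℝ) • (yp + y)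
    let v := (1 / 2 : ℝ) • (y + ym)
    let wp := (1 / τ) • (yp - y)
    let w := (1 / τ) • (y - ym)
    (G ((1 / τ ^ 2) • (yp - 2 • y + ym)) + A y = φ) ↔
      (R ((1 / τ) • (wp - w)) + (1 / 2 : ℝ) • A (vp + v) = φ) := by
  intro A G R vp v wp w
  have hG : G = R + (τ ^ 2 / 4) • A := by
    simp only [G, R, LinearMap.id_add_smul_comp_id_add_smul]
    module
  have hw : (1 / τ) • (wp - w) = (1 / τ ^ 2) • (yp - 2 • y + ym) := by
    rw [smul_sub_smul_eq_sq_smul_second_difference, one_div_pow]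
  have hv : (1 / 2 : ℝ) • A (vp + v) = (1 / 4 : ℝ) • A (yp - 2 • y + ym) + A y := by
    rw [← map_smul, half_smul_add_averages, map_add, map_smul]
  have hτ4 : τ ^ 2 / 4 * (1 / τ ^ 2) = 1 / 4 := by field_simp
  rw [hG, hw, hv, LinearMap.add_apply, LinearMap.smul_apply, map_smul A, smul_smul, hτ4, add_assoc]
end
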